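/- arXiv:1111.3029 — 4 statements merged into one kernel-verified Lean document; each statement's English description precedes it below -/
import Mathlib

section
/- Local quadratic bracketing (Theorem 2 / TapproxLL, deterministic form): Assume condition (L0)(r,δ₀) holds for some δ₀ ≤ δ and that D₊² = (1−δ)D² − ωV² is positive semidefinite. Then for every θ ∈ Θ0(r), L₋(θ,θ*) − err₋(r) ≤ L(θ,θ*) ≤ L₊(θ,θ*) + err₊(r). -/
open MeasureTheory Matrix
open scoped RealInnerProductSpace

/-- Action of a `p × p` real matrix on a vector of `EuclideanSpace ℝ (Fin p)`. -/
noncomputable def mva {p : ℕ} (M : Matrix (Fin p) (Fin p) ℝ)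
    (x : EuclideanSpace ℝ (Fin p)) : EuclideanSpace ℝ (Fin p) :=
  Matrix.toEuclideanLin M x

/-!
Write `L(θ,θ*) = E L(θ,θ*) + (ζ(θ) - ζ(θ*))`. Condition (L0) sandwiches the deterministic part
between `-(1 ± δ)‖D(θ-θ*)‖²/2`, and the definition of `err±` sandwiches the stochastic part
between `(θ-θ*)ᵀ∇ζ(θ*) ± ω‖V(θ-θ*)‖²/2` up to `err±(r)`. Adding the two brackets gives exactly
the quadratic forms `‖D±(θ-θ*)‖² = (1 ∓ δ)‖D(θ-θ*)‖² ∓ ω‖V(θ-θ*)‖²`.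
-/

namespace Matrix.IsHermitian

variable {p : ℕ}

lemma inner_mva_mul_self {A : Matrix (Fin p) (Fin p) ℝ} (hA : A.IsHermitian)
    (u : EuclideanSpace ℝ (Fin p)) : ⟪u, mva (A * A) u⟫ = ‖mva A u‖ ^ 2 := by
  have hAA : mva (A * A) u = toEuclideanLin A (mva A u) := by
    ext1
    simp [mva, mulVec_mulVec]
  have hself : toEuclideanLin A = LinearMap.adjoint (toEuclideanLin A) := by
    rw [← toEuclideanLin_conjTranspose_eq_adjoint, hA.eq]
  rw [hAA, hself, LinearMap.adjoint_inner_right, ← real_inner_self_eq_norm_sq]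
  rfl

lemma norm_mva_sq_eq_of_mul_self_eq {A B C : Matrix (Fin p) (Fin p) ℝ} (hA : A.IsHermitian)
    (hB : B.IsHermitian) (hC : C.IsHermitian) {a b : ℝ}
    (h : A * A = a • (B * B) + b • (C * C)) (u : EuclideanSpace ℝ (Fin p)) :
    ‖mva A u‖ ^ 2 = a * ‖mva B u‖ ^ 2 + b * ‖mva C u‖ ^ 2 := by
  rw [← hA.inner_mva_mul_self, ← hB.inner_mva_mul_self, ← hC.inner_mva_mul_self, h]
  simp [mva, map_add, _root_.map_smul, inner_add_right, inner_smul_right]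

end Matrix.IsHermitian

lemma Matrix.PosDef.norm_mva_pos {p : ℕ} {A : Matrix (Fin p) (Fin p) ℝ} (hA : A.PosDef)
    {u : EuclideanSpace ℝ (Fin p)} (hu : u ≠ 0) : 0 < ‖mva A u‖ := by
  refine norm_pos_iff.mpr fun hAu => hu ?_
  have hinj := mulVec_injective_iff_isUnit.mpr hA.isUnit
  have hAu' : A *ᵥ u.ofLp = 0 := congrArg WithLp.ofLp hAu
  exact WithLp.ofLp_injective 2 (hinj (hAu'.trans (mulVec_zero A).symm))

lemma bounds_of_abs_neg_two_mul_div_sub_one_le {e t δ : ℝ} (ht : 0 < t)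
    (h : |-(2 * e) / t - 1| ≤ δ) : -(1 + δ) * t / 2 ≤ e ∧ e ≤ -(1 - δ) * t / 2 := by
  obtain ⟨hlo, hhi⟩ := abs_le.mp h
  rw [sub_le_iff_le_add, div_le_iff₀ ht] at hhi
  rw [le_sub_iff_add_le, le_div_iff₀ ht] at hlo
  constructor <;> linarith

lemma quadratic_bounds_of_L0 {p : ℕ} {f : EuclideanSpace ℝ (Fin p) → ℝ}
    {D : Matrix (Fin p) (Fin p) ℝ} (hD : D.PosDef) {θ θstar : EuclideanSpace ℝ (Fin p)} {δ : ℝ}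
    (h : θ ≠ θstar → |(-(2 * (f θ - f θstar))) / ‖mva D (θ - θstar)‖ ^ 2 - 1| ≤ δ) :
    -(1 + δ) * ‖mva D (θ - θstar)‖ ^ 2 / 2 ≤ f θ - f θstar ∧
      f θ - f θstar ≤ -(1 - δ) * ‖mva D (θ - θstar)‖ ^ 2 / 2 := by
  rcases eq_or_ne θ θstar with rfl | hne
  · simp [mva]
  · exact bounds_of_abs_neg_two_mul_div_sub_one_le
      (pow_pos (hD.norm_mva_pos (sub_ne_zero.mpr hne)) 2) (h hne)

theorem local_quadratic_bracketing_general
    {p : ℕ} {Ω : Type*}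
    (Θ : Set (EuclideanSpace ℝ (Fin p))) (θstar : EuclideanSpace ℝ (Fin p))
    (L : Ω → EuclideanSpace ℝ (Fin p) → ℝ)
    (EL : EuclideanSpace ℝ (Fin p) → ℝ)
    (gradL : Ω → EuclideanSpace ℝ (Fin p))
    (V D Dp Dm : Matrix (Fin p) (Fin p) ℝ)
    (hV : V.PosDef) (hD : D.PosDef)
    (r δ δ₀ ω : ℝ)
    (hδ₀ : δ₀ ≤ δ)
    -- condition (L0)(r, δ₀)
    (hL0 : ∀ θ ∈ Θ, ‖mva V (θ - θstar)‖ ≤ r → θ ≠ θstar →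
      |(-(2 * (EL θ - EL θstar))) / ‖mva D (θ - θstar)‖ ^ 2 - 1| ≤ δ₀)
    -- D₊ is the (symmetric psd) square root of D₊² := (1-δ)D² - ωV² ⪰ 0,
    -- D₋ that of D₋² := (1+δ)D² + ωV²
    (hDp : Dp.PosSemidef) (hDp2 : Dp * Dp = (1 - δ) • (D * D) - ω • (V * V))
    (hDm : Dm.PosSemidef) (hDm2 : Dm * Dm = (1 + δ) • (D * D) + ω • (V * V))
    -- the bracketing errors err₊(r), err₋(r)
    (errp errm : Ω → ℝ)
    (herrp : ∀ w, IsLUB ((fun θ => (L w θ - EL θ) - (L w θstar - EL θstar)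
        - ⟪θ - θstar, gradL w⟫ - ω / 2 * ‖mva V (θ - θstar)‖ ^ 2) ''
        {θ ∈ Θ | ‖mva V (θ - θstar)‖ ≤ r}) (errp w))
    (herrm : ∀ w, IsLUB ((fun θ => -((L w θ - EL θ) - (L w θstar - EL θstar))
        + ⟪θ - θstar, gradL w⟫ - ω / 2 * ‖mva V (θ - θstar)‖ ^ 2) ''
        {θ ∈ Θ | ‖mva V (θ - θstar)‖ ≤ r}) (errm w)) :
    ∀ w, ∀ θ ∈ Θ, ‖mva V (θ - θstar)‖ ≤ r →
      (⟪θ - θstar, gradL w⟫ - ‖mva Dm (θ - θstar)‖ ^ 2 / 2) - errm w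
          ≤ L w θ - L w θstar ∧
        L w θ - L w θstar
          ≤ (⟪θ - θstar, gradL w⟫ - ‖mva Dp (θ - θstar)‖ ^ 2 / 2) + errp w := by
  intro w θ hθ hθr
  have hmem : θ ∈ {θ ∈ Θ | ‖mva V (θ - θstar)‖ ≤ r} := ⟨hθ, hθr⟩
  have herrp_θ := (herrp w).1 (Set.mem_image_of_mem _ hmem)
  have herrm_θ := (herrm w).1 (Set.mem_image_of_mem _ hmem)
  obtain ⟨hEL_lo, hEL_hi⟩ :=
    quadratic_bounds_of_L0 hD fun hne => (hL0 θ hθ hθr hne).trans hδ₀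
  have hDp_norm := hDp.1.norm_mva_sq_eq_of_mul_self_eq hD.1 hV.1
    (a := 1 - δ) (b := -ω)
    (by rw [hDp2, sub_eq_add_neg, neg_smul]) (θ - θstar)
  have hDm_norm := hDm.1.norm_mva_sq_eq_of_mul_self_eq hD.1 hV.1 hDm2 (θ - θstar)
  constructor <;> linarith

/-- **Local quadratic bracketing** (Theorem `TapproxLL`, deterministic form).
Under condition `(L0)(r, δ₀)` with `δ₀ ≤ δ` and `D₊² = (1-δ)D² - ωV² ⪰ 0`, for every
`θ ∈ Θ₀(r)` one has `L₋(θ,θ*) - err₋(r) ≤ L(θ,θ*) ≤ L₊(θ,θ*) + err₊(r)`. -/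
theorem local_quadratic_bracketing
    {p : ℕ} {Ω : Type*} [MeasurableSpace Ω] (P : Measure Ω) [IsProbabilityMeasure P]
    (Θ : Set (EuclideanSpace ℝ (Fin p))) (θstar : EuclideanSpace ℝ (Fin p))
    (hθstar : θstar ∈ Θ)
    (L : Ω → EuclideanSpace ℝ (Fin p) → ℝ)
    (EL : EuclideanSpace ℝ (Fin p) → ℝ)
    (hEL : ∀ θ, EL θ = ∫ w, L w θ ∂P)
    (hELmax : ∀ θ ∈ Θ, EL θ ≤ EL θstar)
    (hELgrad : HasGradientAt EL 0 θstar)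
    (gradL : Ω → EuclideanSpace ℝ (Fin p))
    (hgradL : ∀ w, HasGradientAt (L w) (gradL w) θstar)
    (V D Dp Dm : Matrix (Fin p) (Fin p) ℝ)
    (hV : V.PosDef) (hD : D.PosDef)
    (r δ δ₀ ω : ℝ) (hr : 0 < r) (hδ : 0 ≤ δ) (hδ1 : δ < 1) (hω : 0 ≤ ω)
    (hδ₀ : δ₀ ≤ δ)
    -- condition (L0)(r, δ₀)
    (hL0 : ∀ θ ∈ Θ, ‖mva V (θ - θstar)‖ ≤ r → θ ≠ θstar →
      |(-(2 * (EL θ - EL θstar))) / ‖mva D (θ - θstar)‖ ^ 2 - 1| ≤ δ₀)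
    -- D₊ is the (symmetric psd) square root of D₊² := (1-δ)D² - ωV² ⪰ 0,
    -- D₋ that of D₋² := (1+δ)D² + ωV²
    (hDp : Dp.PosSemidef) (hDp2 : Dp * Dp = (1 - δ) • (D * D) - ω • (V * V))
    (hDm : Dm.PosSemidef) (hDm2 : Dm * Dm = (1 + δ) • (D * D) + ω • (V * V))
    -- the bracketing errors err₊(r), err₋(r)
    (errp errm : Ω → ℝ)
    (herrp : ∀ w, IsLUB ((fun θ => (L w θ - EL θ) - (L w θstar - EL θstar)
        - ⟪θ - θstar, gradL w⟫ - ω / 2 * ‖mva V (θ - θstar)‖ ^ 2) ''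
        {θ ∈ Θ | ‖mva V (θ - θstar)‖ ≤ r}) (errp w))
    (herrm : ∀ w, IsLUB ((fun θ => -((L w θ - EL θ) - (L w θstar - EL θstar))
        + ⟪θ - θstar, gradL w⟫ - ω / 2 * ‖mva V (θ - θstar)‖ ^ 2) ''
        {θ ∈ Θ | ‖mva V (θ - θstar)‖ ≤ r}) (errm w)) :
    ∀ w, ∀ θ ∈ Θ, ‖mva V (θ - θstar)‖ ≤ r →
      (⟪θ - θstar, gradL w⟫ - ‖mva Dm (θ - θstar)‖ ^ 2 / 2) - errm w
          ≤ L w θ - L w θstar ∧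
        L w θ - L w θstar
          ≤ (⟪θ - θstar, gradL w⟫ - ‖mva Dp (θ - θstar)‖ ^ 2 / 2) + errp w :=
  local_quadratic_bracketing_general Θ θstar L EL gradL V D Dp Dm hV hD r δ δ₀ ω hδ₀ hL0 hDp hDp2
    hDm hDm2 errp errm herrp herrm
end

section
/- Comparison of the shrunk and stretched information matrices (Lemma Lxivgap): Let D², V² be symmetric positive definite p×p matrices with a²D² ≥ V² in the positive semidefinite order for some a > 0. Let δ, ω ≥ 0 with τ := δ + ωa² < 1, and set D₊² := (1−δ)D² − ωV², D₋² := (1+δ)D² + ωV². Then D₊² ≥ (1−τ)D² (in particular D₊² is positive definite), D₋² ≤ (1+τ)D², and ‖I_p − D₊D₋^{-2}D₊‖_op ≤ α := 2τ/(1−τ²). Moreover, for every vector ∇ ∈ ℝ^p, setting ξ := D^{-1}∇, ξ₊ := D₊^{-1}∇, ξ₋ := D₋^{-1}∇, one has ‖ξ₊‖² − ‖ξ‖² ≤ (τ/(1−τ))‖ξ‖², ‖ξ‖² − ‖ξ₋‖² ≤ (τ/(1+τ))‖ξ‖², and ‖ξ₊‖² − ‖ξ₋‖² ≤ α‖ξ‖².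 -/
/-!
Everything follows from the Loewner-order sandwich `(1-τ)D² ≤ D₊² ≤ D² ≤ D₋² ≤ (1+τ)D²`, whose
outer inequalities are both `ω (a²D² - V²) ≥ 0`. Inversion reverses it, which bounds the quadratic
forms of `D₊⁻²` and `D₋⁻²` by those of `D⁻²`. For the operator norm, since `D₊ D₊⁻² D₊ = I`,
`I - D₊ D₋⁻² D₊ = D₊ (D₊⁻² - D₋⁻²) D₊` with
`0 ≤ D₊⁻² - D₋⁻² ≤ ((1-τ)⁻¹ - (1+τ)⁻¹) D⁻² ≤ α D₊⁻²`, so it lies between `0` and `α I`.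
-/

open MeasureTheory Matrix
open scoped RealInnerProductSpace

open scoped MatrixOrder ComplexOrder

namespace Matrix

theorem dotProduct_mulVec_le_of_le {n : Type*} [Fintype n] {A B : Matrix n n ℝ} (h : A ≤ B)
    (x : n → ℝ) : x ⬝ᵥ A *ᵥ x ≤ x ⬝ᵥ B *ᵥ x := by
  have := h.dotProduct_mulVec_nonneg x
  rwa [star_trivial, sub_mulVec, dotProduct_sub, sub_nonneg] at this

theorem PosDef.of_le {n 𝕜 : Type*} [RCLike 𝕜] {A B : Matrix n n 𝕜} (hA : A.PosDef)
    (hAB : A ≤ B) : B.PosDef := by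
  simpa using hA.add_posSemidef hAB

variable {n : Type*} [Fintype n] [DecidableEq n]

section RCLike

variable {𝕜 : Type*} [RCLike 𝕜]

-- Both Schur complements of `[[B, 1], [1, A⁻¹]]` express its positivity.
theorem PosDef.inv_le_inv {A B : Matrix n n 𝕜} (hA : A.PosDef) (hAB : A ≤ B) : B⁻¹ ≤ A⁻¹ := by
  have hB := hA.of_le hAB
  have := hA.inv.isUnit.invertible
  have := hB.isUnit.invertible
  have hblocks : (fromBlocks B 1 1ᴴ A⁻¹).PosSemidef := by
    rw [PosDef.fromBlocks₂₂ B 1 hA.inv, conjTranspose_one, Matrix.mul_one, Matrix.one_mul,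
      nonsing_inv_nonsing_inv A (A.isUnit_iff_isUnit_det.1 hA.isUnit)]
    exact hAB
  have := (PosDef.fromBlocks₁₁ 1 A⁻¹ hB).1 hblocks
  rwa [conjTranspose_one, Matrix.one_mul, Matrix.mul_one] at this

theorem mul_mul_self_inv_mul {M : Matrix n n 𝕜} (hM : IsUnit M) : M * (M * M)⁻¹ * M = 1 := by
  have hdet := M.isUnit_iff_isUnit_det.1 hM
  rw [Matrix.mul_inv_rev, ← Matrix.mul_assoc, mul_nonsing_inv M hdet, Matrix.one_mul,
    nonsing_inv_mul M hdet]

end RCLike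

theorem PosDef.inv_smul {A : Matrix n n ℝ} (hA : A.PosDef) {c : ℝ} (hc : c ≠ 0) :
    (c • A)⁻¹ = c⁻¹ • A⁻¹ := by
  simpa only [Units.smul_def, Units.val_inv_eq_inv_val, Units.val_mk0] using
    inv_smul' A (Units.mk0 c hc) (A.isUnit_iff_isUnit_det.1 hA.isUnit)

theorem PosDef.inv_le_smul_inv {A B : Matrix n n ℝ} (hA : A.PosDef) {c : ℝ} (hc : 0 < c)
    (h : c • A ≤ B) : B⁻¹ ≤ c⁻¹ • A⁻¹ :=
  hA.inv_smul hc.ne' ▸ (hA.smul hc).inv_le_inv h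

theorem PosDef.smul_inv_le_inv {A B : Matrix n n ℝ} (hB : B.PosDef) {c : ℝ} (hc : 0 < c)
    (h : B ≤ c • A) : c⁻¹ • A⁻¹ ≤ B⁻¹ := by
  have hA : A.PosDef := by
    simpa [smul_smul, inv_mul_cancel₀ hc.ne'] using (hB.of_le h).smul (inv_pos.2 hc)
  exact hA.inv_smul hc.ne' ▸ hB.inv_le_inv h

open scoped Norms.L2Operator in
theorem norm_toEuclideanCLM_le_of_nonneg_of_le {A : Matrix n n ℝ} {r : ℝ} (hr : 0 ≤ r)
    (h0 : 0 ≤ A) (h : A ≤ r • 1) : ‖toEuclideanCLM (𝕜 := ℝ) A‖ ≤ r := by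
  have hA : IsSelfAdjoint A := IsSelfAdjoint.of_nonneg h0
  rw [← cstar_norm_def, ← cfc_id ℝ A, norm_cfc_le_iff id A hr]
  rw [Algebra.smul_def, mul_one, le_algebraMap_iff_spectrum_le] at h
  intro x hx
  simpa [abs_of_nonneg (spectrum_nonneg_of_nonneg h0 hx)] using h x hx

theorem norm_toEuclideanCLM_mul_mul_le {S X : Matrix n n ℝ} (hS : S.IsHermitian) (hSu : IsUnit S)
    {r : ℝ} (hr : 0 ≤ r) (h0 : 0 ≤ X) (h : X ≤ r • (S * S)⁻¹) :
    ‖toEuclideanCLM (𝕜 := ℝ) (S * X * S)‖ ≤ r := by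
  have hstar : star S = S := hS.eq
  refine norm_toEuclideanCLM_le_of_nonneg_of_le hr ?_ ?_
  · simpa [hstar] using star_left_conjugate_nonneg h0 S
  · calc S * X * S ≤ S * (r • (S * S)⁻¹) * S := by
          simpa [hstar] using star_left_conjugate_le_conjugate h S
      _ = r • 1 := by rw [Matrix.mul_smul, Matrix.smul_mul, mul_mul_self_inv_mul hSu]

theorem sq_norm_toEuclideanLin (B : Matrix n n ℝ) (x : EuclideanSpace ℝ n) :
    ‖toEuclideanLin B x‖ ^ 2 = x.ofLp ⬝ᵥ (Bᴴ * B) *ᵥ x.ofLp := by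
  rw [← coe_toEuclideanCLM_eq_toEuclideanLin, ContinuousLinearMap.coe_coe,
    ← real_inner_self_eq_norm_sq, ← inner_toEuclideanCLM, map_mul, ContinuousLinearMap.mul_def,
    ContinuousLinearMap.comp_apply, ← star_eq_conjTranspose, map_star,
    ContinuousLinearMap.star_eq_adjoint, ContinuousLinearMap.adjoint_inner_right]

end Matrix

theorem sq_norm_mva_inv {p : ℕ} {S Q : Matrix (Fin p) (Fin p) ℝ} (hS : S.IsHermitian)
    (h : S * S = Q) (x : EuclideanSpace ℝ (Fin p)) :
    ‖mva S⁻¹ x‖ ^ 2 = x.ofLp ⬝ᵥ Q⁻¹ *ᵥ x.ofLp := by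
  rw [mva, sq_norm_toEuclideanLin, conjTranspose_nonsing_inv, hS.eq, ← Matrix.mul_inv_rev, h]

section Sandwich

variable {n : Type*} {A B : Matrix n n ℝ} {a δ ω : ℝ}

theorem smul_le_shrunk (hAB : (a ^ 2 • A - B).PosSemidef) (hω : 0 ≤ ω) :
    (1 - (δ + ω * a ^ 2)) • A ≤ (1 - δ) • A - ω • B := by
  have h : (1 - δ) • A - ω • B - (1 - (δ + ω * a ^ 2)) • A = ω • (a ^ 2 • A - B) := by module
  exact le_iff.2 (h ▸ hAB.smul hω)

theorem stretched_le_smul (hAB : (a ^ 2 • A - B).PosSemidef) (hω : 0 ≤ ω) :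
    (1 + δ) • A + ω • B ≤ (1 + (δ + ω * a ^ 2)) • A := by
  have h : (1 + (δ + ω * a ^ 2)) • A - ((1 + δ) • A + ω • B) = ω • (a ^ 2 • A - B) := by module
  exact le_iff.2 (h ▸ hAB.smul hω)

theorem shrunk_le_self (hA : A.PosSemidef) (hB : B.PosSemidef) (hδ : 0 ≤ δ) (hω : 0 ≤ ω) :
    (1 - δ) • A - ω • B ≤ A := by
  have h : A - ((1 - δ) • A - ω • B) = δ • A + ω • B := by module
  exact le_iff.2 (h ▸ (hA.smul hδ).add (hB.smul hω))

theorem self_le_stretched (hA : A.PosSemidef) (hB : B.PosSemidef) (hδ : 0 ≤ δ) (hω : 0 ≤ ω) :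
    A ≤ (1 + δ) • A + ω • B := by
  have h : (1 + δ) • A + ω • B - A = δ • A + ω • B := by module
  exact le_iff.2 (h ▸ (hA.smul hδ).add (hB.smul hω))

end Sandwich

section Comparison

variable {p : ℕ} {Q P M S Sp Sm : Matrix (Fin p) (Fin p) ℝ} {τ : ℝ}

theorem sq_norm_mva_inv_sub_le_of_smul_le (hτ : τ < 1) (hQ : Q.PosDef) (hS : S.IsHermitian)
    (hSQ : S * S = Q) (hSp : Sp.IsHermitian) (hSpP : Sp * Sp = P) (h : (1 - τ) • Q ≤ P)
    (x : EuclideanSpace ℝ (Fin p)) :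
    ‖mva Sp⁻¹ x‖ ^ 2 - ‖mva S⁻¹ x‖ ^ 2 ≤ τ / (1 - τ) * ‖mva S⁻¹ x‖ ^ 2 := by
  have hle : ‖mva Sp⁻¹ x‖ ^ 2 ≤ (1 - τ)⁻¹ * ‖mva S⁻¹ x‖ ^ 2 := by
    simpa only [sq_norm_mva_inv hS hSQ, sq_norm_mva_inv hSp hSpP, smul_mulVec, dotProduct_smul,
      smul_eq_mul] using dotProduct_mulVec_le_of_le (hQ.inv_le_smul_inv (sub_pos.2 hτ) h) x.ofLp
  have h1m : 1 - τ ≠ 0 := by linarith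
  have hcoeff : (1 - τ)⁻¹ = 1 + τ / (1 - τ) := by field_simp; ring
  linear_combination hle + ‖mva S⁻¹ x‖ ^ 2 * hcoeff

theorem sq_norm_mva_inv_sub_le_of_le_smul (hτ : 0 < 1 + τ) (hM : M.PosDef) (hS : S.IsHermitian)
    (hSQ : S * S = Q) (hSm : Sm.IsHermitian) (hSmM : Sm * Sm = M) (h : M ≤ (1 + τ) • Q)
    (x : EuclideanSpace ℝ (Fin p)) :
    ‖mva S⁻¹ x‖ ^ 2 - ‖mva Sm⁻¹ x‖ ^ 2 ≤ τ / (1 + τ) * ‖mva S⁻¹ x‖ ^ 2 := by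
  have hle : (1 + τ)⁻¹ * ‖mva S⁻¹ x‖ ^ 2 ≤ ‖mva Sm⁻¹ x‖ ^ 2 := by
    simpa only [sq_norm_mva_inv hS hSQ, sq_norm_mva_inv hSm hSmM, smul_mulVec, dotProduct_smul,
      smul_eq_mul] using dotProduct_mulVec_le_of_le (hM.smul_inv_le_inv hτ h) x.ofLp
  have hcoeff : (1 + τ)⁻¹ = 1 - τ / (1 + τ) := by field_simp; ring
  linear_combination hle - ‖mva S⁻¹ x‖ ^ 2 * hcoeff

end Comparison

section OperatorNorm

variable {n : Type*} [Fintype n] [DecidableEq n] {Q P M Sp Sm : Matrix n n ℝ} {τ : ℝ}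

theorem norm_toEuclideanCLM_one_sub_le (hτ0 : 0 ≤ τ) (hτ1 : τ < 1) (hQ : Q.PosDef)
    (hSp : Sp.IsHermitian) (hSpP : Sp * Sp = P) (hSmM : Sm * Sm = M) (hPlow : (1 - τ) • Q ≤ P)
    (hPQ : P ≤ Q) (hQM : Q ≤ M) (hMup : M ≤ (1 + τ) • Q) :
    ‖toEuclideanCLM (𝕜 := ℝ) (n := n) (1 - Sp * (Sm⁻¹ * Sm⁻¹) * Sp)‖ ≤ 2 * τ / (1 - τ ^ 2) := by
  have hP : P.PosDef := (hQ.smul (sub_pos.2 hτ1)).of_le hPlow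
  have hSpu : IsUnit Sp := isUnit_of_mul_isUnit_left (hSpP ▸ hP.isUnit)
  have hsq : 0 < 1 - τ ^ 2 := by nlinarith
  have hα : 0 ≤ 2 * τ / (1 - τ ^ 2) := by positivity
  have hX : P⁻¹ - M⁻¹ ≤ (2 * τ / (1 - τ ^ 2)) • (Sp * Sp)⁻¹ := by
    have h1m : 1 - τ ≠ 0 := by linarith
    have h1p : 1 + τ ≠ 0 := by linarith
    have hcoeff : (1 - τ)⁻¹ - (1 + τ)⁻¹ = 2 * τ / (1 - τ ^ 2) := by
      rw [show 1 - τ ^ 2 = (1 - τ) * (1 + τ) by ring]; field_simp; ring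
    rw [hSpP]
    calc P⁻¹ - M⁻¹ ≤ (1 - τ)⁻¹ • Q⁻¹ - (1 + τ)⁻¹ • Q⁻¹ :=
          sub_le_sub (hQ.inv_le_smul_inv (sub_pos.2 hτ1) hPlow)
            ((hQ.of_le hQM).smul_inv_le_inv (by linarith) hMup)
      _ = (2 * τ / (1 - τ ^ 2)) • Q⁻¹ := by rw [← sub_smul, hcoeff]
      _ ≤ (2 * τ / (1 - τ ^ 2)) • P⁻¹ := smul_le_smul_of_nonneg_left (hP.inv_le_inv hPQ) hα
  rw [show 1 - Sp * (Sm⁻¹ * Sm⁻¹) * Sp = Sp * (P⁻¹ - M⁻¹) * Sp by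
    rw [Matrix.mul_sub, Matrix.sub_mul, ← hSpP, mul_mul_self_inv_mul hSpu, ← hSmM,
      Matrix.mul_inv_rev]]
  exact norm_toEuclideanCLM_mul_mul_le hSp hSpu hα
    (sub_nonneg.2 (hP.inv_le_inv (hPQ.trans hQM))) hX

end OperatorNorm

theorem shrunk_stretched_matrix_comparison_general
    {p : ℕ}
    (D2 V2 D Dp Dm : Matrix (Fin p) (Fin p) ℝ)
    (hD2 : D2.PosDef) (hV2 : V2.PosDef)
    (a : ℝ) (haDV : (a ^ 2 • D2 - V2).PosSemidef)
    (δ ω : ℝ) (hδ : 0 ≤ δ) (hω : 0 ≤ ω) (hτ : δ + ω * a ^ 2 < 1)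
    -- `D`, `D₊`, `D₋` are the symmetric psd square roots of `D²`, `D₊²`, `D₋²`
    (hD : D.PosSemidef) (hDsq : D * D = D2)
    (hDp : Dp.PosSemidef) (hDpsq : Dp * Dp = (1 - δ) • D2 - ω • V2)
    (hDm : Dm.PosSemidef) (hDmsq : Dm * Dm = (1 + δ) • D2 + ω • V2)
    (grad : EuclideanSpace ℝ (Fin p)) :
    ((1 - δ) • D2 - ω • V2 - (1 - (δ + ω * a ^ 2)) • D2).PosSemidef
    ∧ ((1 - δ) • D2 - ω • V2).PosDef
    ∧ ((1 + (δ + ω * a ^ 2)) • D2 - ((1 + δ) • D2 + ω • V2)).PosSemidef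
    ∧ ‖Matrix.toEuclideanCLM (𝕜 := ℝ) (n := Fin p) (1 - Dp * (Dm⁻¹ * Dm⁻¹) * Dp)‖
        ≤ 2 * (δ + ω * a ^ 2) / (1 - (δ + ω * a ^ 2) ^ 2)
    ∧ ‖mva Dp⁻¹ grad‖ ^ 2 - ‖mva D⁻¹ grad‖ ^ 2
        ≤ (δ + ω * a ^ 2) / (1 - (δ + ω * a ^ 2)) * ‖mva D⁻¹ grad‖ ^ 2
    ∧ ‖mva D⁻¹ grad‖ ^ 2 - ‖mva Dm⁻¹ grad‖ ^ 2
        ≤ (δ + ω * a ^ 2) / (1 + (δ + ω * a ^ 2)) * ‖mva D⁻¹ grad‖ ^ 2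
    ∧ ‖mva Dp⁻¹ grad‖ ^ 2 - ‖mva Dm⁻¹ grad‖ ^ 2
        ≤ 2 * (δ + ω * a ^ 2) / (1 - (δ + ω * a ^ 2) ^ 2) * ‖mva D⁻¹ grad‖ ^ 2 := by
  set τ := δ + ω * a ^ 2
  have hτ0 : 0 ≤ τ := by positivity
  have hPlow := smul_le_shrunk (δ := δ) haDV hω
  have hMup := stretched_le_smul (δ := δ) haDV hω
  have hPD2 := shrunk_le_self hD2.posSemidef hV2.posSemidef hδ hω
  have hD2M := self_le_stretched hD2.posSemidef hV2.posSemidef hδ hω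
  have hshrunk := sq_norm_mva_inv_sub_le_of_smul_le hτ hD2 hD.1 hDsq hDp.1 hDpsq hPlow grad
  have hstretched := sq_norm_mva_inv_sub_le_of_le_smul (by linarith) (hD2.of_le hD2M) hD.1 hDsq
    hDm.1 hDmsq hMup grad
  refine ⟨hPlow, (hD2.smul (sub_pos.2 hτ)).of_le hPlow, hMup,
    norm_toEuclideanCLM_one_sub_le hτ0 hτ hD2 hDp.1 hDpsq hDmsq hPlow hPD2 hD2M hMup,
    hshrunk, hstretched, ?_⟩
  have h1m : 1 - τ ≠ 0 := by linarith
  have h1p : 1 + τ ≠ 0 := by linarith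
  have hsum : τ / (1 - τ) + τ / (1 + τ) = 2 * τ / (1 - τ ^ 2) := by
    rw [show 1 - τ ^ 2 = (1 - τ) * (1 + τ) by ring]; field_simp; ring
  linear_combination hshrunk + hstretched + ‖mva D⁻¹ grad‖ ^ 2 * hsum

/-- **Comparison of the shrunk and stretched information matrices** (Lemma `Lxivgap`).
With `τ := δ + ωa² < 1`, `D₊² := (1-δ)D² - ωV²`, `D₋² := (1+δ)D² + ωV²`:
`D₊² ⪰ (1-τ)D²` (so `D₊²` is positive definite), `D₋² ⪯ (1+τ)D²`,
`‖I - D₊D₋⁻²D₊‖ ≤ α := 2τ/(1-τ²)`, and the norms of `ξ = D⁻¹∇`, `ξ₊ = D₊⁻¹∇`,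
`ξ₋ = D₋⁻¹∇` compare as stated. -/
theorem shrunk_stretched_matrix_comparison
    {p : ℕ}
    (D2 V2 D Dp Dm : Matrix (Fin p) (Fin p) ℝ)
    (hD2 : D2.PosDef) (hV2 : V2.PosDef)
    (a : ℝ) (ha : 0 < a) (haDV : (a ^ 2 • D2 - V2).PosSemidef)
    (δ ω : ℝ) (hδ : 0 ≤ δ) (hω : 0 ≤ ω) (hτ : δ + ω * a ^ 2 < 1)
    -- `D`, `D₊`, `D₋` are the symmetric psd square roots of `D²`, `D₊²`, `D₋²`
    (hD : D.PosSemidef) (hDsq : D * D = D2)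
    (hDp : Dp.PosSemidef) (hDpsq : Dp * Dp = (1 - δ) • D2 - ω • V2)
    (hDm : Dm.PosSemidef) (hDmsq : Dm * Dm = (1 + δ) • D2 + ω • V2)
    (grad : EuclideanSpace ℝ (Fin p)) :
    ((1 - δ) • D2 - ω • V2 - (1 - (δ + ω * a ^ 2)) • D2).PosSemidef
    ∧ ((1 - δ) • D2 - ω • V2).PosDef
    ∧ ((1 + (δ + ω * a ^ 2)) • D2 - ((1 + δ) • D2 + ω • V2)).PosSemidef
    ∧ ‖Matrix.toEuclideanCLM (𝕜 := ℝ) (n := Fin p) (1 - Dp * (Dm⁻¹ * Dm⁻¹) * Dp)‖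
        ≤ 2 * (δ + ω * a ^ 2) / (1 - (δ + ω * a ^ 2) ^ 2)
    ∧ ‖mva Dp⁻¹ grad‖ ^ 2 - ‖mva D⁻¹ grad‖ ^ 2
        ≤ (δ + ω * a ^ 2) / (1 - (δ + ω * a ^ 2)) * ‖mva D⁻¹ grad‖ ^ 2
    ∧ ‖mva D⁻¹ grad‖ ^ 2 - ‖mva Dm⁻¹ grad‖ ^ 2
        ≤ (δ + ω * a ^ 2) / (1 + (δ + ω * a ^ 2)) * ‖mva D⁻¹ grad‖ ^ 2
    ∧ ‖mva Dp⁻¹ grad‖ ^ 2 - ‖mva Dm⁻¹ grad‖ ^ 2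
        ≤ 2 * (δ + ω * a ^ 2) / (1 - (δ + ω * a ^ 2) ^ 2) * ‖mva D⁻¹ grad‖ ^ 2 :=
  shrunk_stretched_matrix_comparison_general D2 V2 D Dp Dm hD2 hV2 a haDV δ ω hδ hω hτ hD hDsq hDp
    hDpsq hDm hDmsq grad
end

section
/- Sub-Gaussianity of the score in generalized linear models (Lemma LED0EDGLM): Let ε₁,…,ε_n be independent real random variables with E εᵢ = 0, and suppose there are constants ν ≥ 1, g > 0 and, for each i, a constant sᵢ > 0 such that for all |λ| ≤ g, log E exp( λ εᵢ / sᵢ ) ≤ ν²λ²/2. Let Ψ₁,…,Ψ_n ∈ ℝ^p be such that V² := Σᵢ sᵢ² ΨᵢΨᵢᵀ is positive definite, and define N by N^{-1/2} := max_i sup_{γ≠0} sᵢ |Ψᵢᵀγ| / ‖Vγ‖. Then for every nonzero γ ∈ ℝ^p and every |λ| ≤ g N^{1/2}, log E exp( λ γᵀ(Σᵢ Ψᵢ εᵢ) / ‖Vγ‖ ) ≤ ν²λ²/2. -/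
/-!
Write `D = ‖Vγ‖` and `cᵢ = λ sᵢ ⟪Ψᵢ, γ⟫ / D`. Then `λ ⟪γ, Σᵢ εᵢ Ψᵢ⟫ / D = Σᵢ cᵢ εᵢ / sᵢ`, the
definition of `N` gives `|cᵢ| ≤ g`, and `D² = ⟪γ, V²γ⟫ = Σᵢ sᵢ² ⟪Ψᵢ, γ⟫²` gives `Σᵢ cᵢ² = λ²`.
By independence the exponential moment of the sum factorizes, so its logarithm is at most
`Σᵢ ν² cᵢ² / 2 = ν² λ² / 2`.
-/

open MeasureTheory Matrix ProbabilityTheory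
open scoped RealInnerProductSpace

open Finset Real

lemma ProbabilityTheory.iIndepFun.log_integral_exp_sum_le {ι Ω : Type*} [Fintype ι]
    [MeasurableSpace Ω] {μ : Measure Ω} {X : ι → Ω → ℝ} (hX : iIndepFun X μ)
    (hmeas : ∀ i, AEMeasurable (X i) μ)
    {b : ι → ℝ} (hb : ∀ i, log (∫ ω, exp (X i ω) ∂μ) ≤ b i) (hb₀ : 0 ≤ ∑ i, b i) :
    log (∫ ω, exp (∑ i, X i ω) ∂μ) ≤ ∑ i, b i := by
  have hprod := hX.mgf_sum₀ (t := 1) hmeas univ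
  simp only [mgf, one_mul, Finset.sum_apply] at hprod
  rw [hprod]
  by_cases hzero : ∃ i, ∫ ω, exp (X i ω) ∂μ = 0
  · obtain ⟨i, hi⟩ := hzero
    rwa [prod_eq_zero (mem_univ i) hi, log_zero]
  · push Not at hzero
    rw [log_prod fun i _ => hzero i]
    exact sum_le_sum fun i _ => hb i

lemma norm_mva_pos {p : ℕ} {V : Matrix (Fin p) (Fin p) ℝ} (hV : V.PosDef)
    {γ : EuclideanSpace ℝ (Fin p)} (hγ : γ ≠ 0) : 0 < ‖mva V γ‖ := by
  have hmul : V *ᵥ γ.ofLp ≠ 0 := fun h => by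
    simpa [h] using hV.dotProduct_mulVec_pos (x := γ.ofLp) (by simpa using hγ)
  simpa [mva, toLpLin_apply] using hmul

lemma norm_mva_sq_eq_sum {p n : ℕ} {V : Matrix (Fin p) (Fin p) ℝ} (hV : V.IsHermitian)
    {s : Fin n → ℝ} {Ψ : Fin n → EuclideanSpace ℝ (Fin p)}
    (hV2 : V * V = ∑ i, s i ^ 2 • vecMulVec (Ψ i) (Ψ i)) (γ : EuclideanSpace ℝ (Fin p)) :
    ‖mva V γ‖ ^ 2 = ∑ i, s i ^ 2 * ⟪Ψ i, γ⟫ ^ 2 := by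
  have hVt : Vᵀ = V := by simpa [conjTranspose_eq_transpose_of_trivial] using hV.eq
  calc ‖mva V γ‖ ^ 2 = (V *ᵥ γ.ofLp) ⬝ᵥ (V *ᵥ γ.ofLp) := by
        rw [← real_inner_self_eq_norm_sq]; exact dotProduct_comm _ _
    _ = γ.ofLp ⬝ᵥ ((V * V) *ᵥ γ.ofLp) := by
        conv_rhs => rw [← mulVec_mulVec, dotProduct_mulVec, ← mulVec_transpose, hVt]
    _ = ∑ i, s i ^ 2 * ⟪Ψ i, γ⟫ ^ 2 := by
        simp only [hV2, sum_mulVec, dotProduct_sum, smul_mulVec, vecMulVec_mulVec, dotProduct_smul,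
          EuclideanSpace.inner_eq_star_dotProduct, star_trivial, smul_eq_mul, op_smul_eq_mul]
        refine sum_congr rfl fun i _ => ?_
        rw [dotProduct_comm (Ψ i).ofLp]; ring

theorem glm_score_subgaussian_general
    {p n : ℕ}
    {Ω : Type*} [MeasurableSpace Ω] (P : Measure Ω)
    (ε : Fin n → Ω → ℝ)
    (hmeas : ∀ i, Measurable (ε i))
    (hindep : iIndepFun ε P)
    (ν g : ℝ)
    (s : Fin n → ℝ) (hs : ∀ i, 0 < s i)
    -- marginal sub-Gaussianity
    (hsubG : ∀ i, ∀ lam : ℝ, |lam| ≤ g →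
      Real.log (∫ w, Real.exp (lam * ε i w / s i) ∂P) ≤ ν ^ 2 * lam ^ 2 / 2)
    (Ψ : Fin n → EuclideanSpace ℝ (Fin p))
    -- V is the symmetric positive definite square root of V² = Σᵢ sᵢ² ΨᵢΨᵢᵀ
    (V : Matrix (Fin p) (Fin p) ℝ) (hV : V.PosDef)
    (hV2 : V * V = ∑ i, s i ^ 2 • Matrix.vecMulVec (Ψ i) (Ψ i))
    -- N is defined by N⁻¹ᐟ² = maxᵢ sup_{γ ≠ 0} sᵢ|Ψᵢᵀγ|/‖Vγ‖
    (N : ℝ) (hN : 0 < N)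
    (hNdef : IsLUB {x : ℝ | ∃ i : Fin n, ∃ γ : EuclideanSpace ℝ (Fin p),
        γ ≠ 0 ∧ x = s i * |⟪Ψ i, γ⟫| / ‖mva V γ‖} (Real.sqrt N)⁻¹) :
    ∀ γ : EuclideanSpace ℝ (Fin p), γ ≠ 0 → ∀ lam : ℝ, |lam| ≤ g * Real.sqrt N →
      Real.log (∫ w, Real.exp (lam * ⟪γ, ∑ i, ε i w • Ψ i⟫ / ‖mva V γ‖) ∂P)
        ≤ ν ^ 2 * lam ^ 2 / 2 := by
  intro γ hγ lam hlam
  have hD := norm_mva_pos hV hγ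
  set c : Fin n → ℝ := fun i => lam * s i * ⟪Ψ i, γ⟫ / ‖mva V γ‖
  have hc : ∀ i, |c i| ≤ g := fun i => by
    have hi : s i * |⟪Ψ i, γ⟫| / ‖mva V γ‖ ≤ (√N)⁻¹ := hNdef.1 ⟨i, γ, hγ, rfl⟩
    calc |c i| = |lam| * (s i * |⟪Ψ i, γ⟫| / ‖mva V γ‖) := by
          simp only [c, abs_div, abs_mul, abs_of_pos (hs i), abs_of_pos hD]; ring
      _ ≤ g * √N * (√N)⁻¹ := mul_le_mul hlam hi
          (div_nonneg (mul_nonneg (hs i).le (abs_nonneg _)) hD.le) ((abs_nonneg _).trans hlam)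
      _ = g := mul_inv_cancel_right₀ (sqrt_pos.mpr hN).ne' g
  have hc_sq : ∑ i, c i ^ 2 = lam ^ 2 := by
    simp only [c, div_pow, mul_pow, mul_assoc, ← sum_div, ← mul_sum,
      ← norm_mva_sq_eq_sum hV.isHermitian hV2 γ]
    field_simp
  have hscore : ∀ w, lam * ⟪γ, ∑ i, ε i w • Ψ i⟫ / ‖mva V γ‖ = ∑ i, c i * ε i w / s i := by
    intro w
    simp only [inner_sum, real_inner_smul_right, real_inner_comm γ, mul_sum, sum_div, c]
    refine sum_congr rfl fun i _ => ?_
    field_simp [(hs i).ne']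
  have hX : iIndepFun (fun i w => c i * ε i w / s i) P :=
    hindep.comp _ fun i => (measurable_id.const_mul (c i)).div_const (s i)
  calc Real.log (∫ w, Real.exp (lam * ⟪γ, ∑ i, ε i w • Ψ i⟫ / ‖mva V γ‖) ∂P)
      _ = log (∫ w, exp (∑ i, c i * ε i w / s i) ∂P) := by simp only [hscore]
      _ ≤ ∑ i, ν ^ 2 * c i ^ 2 / 2 :=
        hX.log_integral_exp_sum_le (fun i => (((hmeas i).const_mul _).div_const _).aemeasurable)
          (fun i => hsubG i (c i) (hc i)) (by positivity)
      _ = ν ^ 2 * lam ^ 2 / 2 := by rw [← sum_div, ← mul_sum, hc_sq]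

/-- **Sub-Gaussianity of the score in generalized linear models** (Lemma `LED0EDGLM`):
with independent centered errors `εᵢ` having scaled sub-Gaussian marginals,
`V² = Σᵢ sᵢ²ΨᵢΨᵢᵀ` and `N⁻¹ᐟ² = maxᵢ sup_γ sᵢ|Ψᵢᵀγ|/‖Vγ‖`, the score `Σᵢ Ψᵢεᵢ`
is `V`-sub-Gaussian for `|λ| ≤ g N¹ᐟ²`. -/
theorem glm_score_subgaussian
    {p n : ℕ}
    {Ω : Type*} [MeasurableSpace Ω] (P : Measure Ω) [IsProbabilityMeasure P]
    (ε : Fin n → Ω → ℝ)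
    (hmeas : ∀ i, Measurable (ε i))
    (hint : ∀ i, Integrable (ε i) P)
    (hindep : iIndepFun ε P)
    (hcentered : ∀ i, ∫ w, ε i w ∂P = 0)
    (ν g : ℝ) (hν : 1 ≤ ν) (hg : 0 < g)
    (s : Fin n → ℝ) (hs : ∀ i, 0 < s i)
    -- marginal sub-Gaussianity
    (hsubG : ∀ i, ∀ lam : ℝ, |lam| ≤ g →
      Real.log (∫ w, Real.exp (lam * ε i w / s i) ∂P) ≤ ν ^ 2 * lam ^ 2 / 2)
    (Ψ : Fin n → EuclideanSpace ℝ (Fin p))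
    -- V is the symmetric positive definite square root of V² = Σᵢ sᵢ² ΨᵢΨᵢᵀ
    (V : Matrix (Fin p) (Fin p) ℝ) (hV : V.PosDef)
    (hV2 : V * V = ∑ i, s i ^ 2 • Matrix.vecMulVec (Ψ i) (Ψ i))
    -- N is defined by N⁻¹ᐟ² = maxᵢ sup_{γ ≠ 0} sᵢ|Ψᵢᵀγ|/‖Vγ‖
    (N : ℝ) (hN : 0 < N)
    (hNdef : IsLUB {x : ℝ | ∃ i : Fin n, ∃ γ : EuclideanSpace ℝ (Fin p),
        γ ≠ 0 ∧ x = s i * |⟪Ψ i, γ⟫| / ‖mva V γ‖} (Real.sqrt N)⁻¹) :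
    ∀ γ : EuclideanSpace ℝ (Fin p), γ ≠ 0 → ∀ lam : ℝ, |lam| ≤ g * Real.sqrt N →
      Real.log (∫ w, Real.exp (lam * ⟪γ, ∑ i, ε i w • Ψ i⟫ / ‖mva V γ‖) ∂P)
        ≤ ν ^ 2 * lam ^ 2 / 2 :=
  glm_score_subgaussian_general P ε hmeas hindep ν g s hs hsubG Ψ V hV hV2 N hN hNdef
end

section
/- Hessian of the expected least-absolute-deviation contrast (Lemma Lidentmed): Let Y₁,…,Y_n be independent real random variables and Ψ₁,…,Ψ_n ∈ ℝ^p. Fix θ* ∈ ℝ^p and suppose each residual Yᵢ − Ψᵢᵀθ* has a bounded continuous density pᵢ on ℝ. Define M(θ) := −(1/2) Σᵢ E|Yᵢ − Ψᵢᵀθ| and assume θ* is a stationary point of M, i.e. Σᵢ ( P(Yᵢ ≤ Ψᵢᵀθ*) − 1/2 ) Ψᵢ = 0. Then: (i) M is twice differentiable with −∇²M(θ) = Σᵢ pᵢ( Ψᵢᵀ(θ−θ*) ) ΨᵢΨᵢᵀ for every θ; (ii) for every θ there exists θ° on the segment [θ*, θ] such that M(θ*) − M(θ) = (1/2) Σᵢ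 |Ψᵢᵀ(θ−θ*)|² pᵢ( Ψᵢᵀ(θ°−θ*) ). -/
/-!
If `X` has no atom at `s`, then `t ↦ E|X - t|` has derivative `2 P(X ≤ s) - 1` at `s`: the
integrand is `1`-Lipschitz in `t` and a.s. differentiable at `s`, so one may differentiate under
the integral. A continuous density makes the distribution function continuous (no atoms) and
differentiable with derivative the density. The contrast is a sum of such functions composed
with the linear forms `θ ↦ ⟪Ψᵢ, θ⟫`, so the chain rule yields its gradient and Hessian, and (ii)
is Taylor's formula with Lagrange remainder along `[θ*, θ]`, whose first-order term vanishes
since `θ*` is stationary.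
-/

open MeasureTheory Matrix ProbabilityTheory
open scoped RealInnerProductSpace

open Set Filter

theorem hasDerivAt_integral_Iic {E : Type*} [NormedAddCommGroup E] [NormedSpace ℝ E]
    [CompleteSpace E] {f : ℝ → E} (hf : Continuous f) (hInt : ∀ t, IntegrableOn f (Iic t))
    (x : ℝ) : HasDerivAt (fun u => ∫ v in Iic u, f v) (f x) x := by
  have hsplit : (fun u => ∫ v in Iic u, f v) = fun u => (∫ v in Iic x, f v) + ∫ v in x..u, f v := by
    ext u
    rw [← intervalIntegral.integral_Iic_sub_Iic (hInt x) (hInt u)]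
    abel
  rw [hsplit]
  exact (intervalIntegral.integral_hasDerivAt_right (hf.intervalIntegrable _ _)
    hf.stronglyMeasurable.stronglyMeasurableAtFilter hf.continuousAt).const_add _

theorem lipschitzWith_abs_sub_left (a : ℝ) : LipschitzWith 1 fun x : ℝ => |a - x| := by
  refine LipschitzWith.of_dist_le_mul fun x y => ?_
  simpa [Real.dist_eq, abs_sub_comm x y] using abs_abs_sub_abs_le_abs_sub (a - x) (a - y)

theorem hasDerivAt_abs_sub_left {a s : ℝ} (h : a ≠ s) :
    HasDerivAt (fun x => |a - x|) (if a ≤ s then 1 else -1) s := by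
  rcases h.lt_or_gt with h | h
  · simpa [h.le, Function.comp_def] using
      (hasDerivAt_abs_neg (sub_neg.2 h)).comp s ((hasDerivAt_id s).const_sub a)
  · simpa [h.not_ge, Function.comp_def] using
      (hasDerivAt_abs_pos (sub_pos.2 h)).comp s ((hasDerivAt_id s).const_sub a)

theorem exists_Ioo_sub_eq_taylor_two {φ φ' φ'' : ℝ → ℝ} {a b : ℝ} (hab : a < b)
    (hφ : ∀ t, HasDerivAt φ (φ' t) t) (hφ' : ∀ t, HasDerivAt φ' (φ'' t) t) :
    ∃ t ∈ Ioo a b, φ b - φ a = φ' a * (b - a) + φ'' t * (b - a) ^ 2 / 2 := by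
  set K := (φ b - φ a - φ' a * (b - a)) / (b - a) ^ 2 with hK
  have hKab : K * (b - a) ^ 2 = φ b - φ a - φ' a * (b - a) :=
    div_mul_cancel₀ _ (pow_ne_zero 2 (sub_ne_zero.2 hab.ne'))
  -- `K` makes `ψ t := φ t - φ' a * (t - a) - K * (t - a) ^ 2` take equal values at `a` and `b`;
  -- Rolle's theorem for `ψ` on `[a, b]`, then for `ψ'` on `[a, t₁]`, gives `φ'' t₀ = 2 * K`.
  have hψ : ∀ t, HasDerivAt (fun t => φ t - φ' a * (t - a) - K * (t - a) ^ 2)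
      (φ' t - φ' a - 2 * K * (t - a)) t := fun t =>
    (((hφ t).sub (((hasDerivAt_id t).sub_const a).const_mul (φ' a))).sub
      ((((hasDerivAt_id t).sub_const a).pow 2).const_mul K)).congr_deriv
      (by simp only [id_eq]; ring)
  have hψ' : ∀ t, HasDerivAt (fun t => φ' t - φ' a - 2 * K * (t - a)) (φ'' t - 2 * K) t :=
    fun t => (((hφ' t).sub_const (φ' a)).sub
      (((hasDerivAt_id t).sub_const a).const_mul (2 * K))).congr_deriv (by simp)
  obtain ⟨t₁, ht₁, hψt₁⟩ := exists_hasDerivAt_eq_zero hab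
    (HasDerivAt.continuousOn fun t _ => hψ t) (by linear_combination hKab) fun t _ => hψ t
  obtain ⟨t₀, ht₀, hψ't₀⟩ := exists_hasDerivAt_eq_zero ht₁.1
    (HasDerivAt.continuousOn fun t _ => hψ' t) (by rw [hψt₁]; ring) fun t _ => hψ' t
  refine ⟨t₀, ⟨ht₀.1, ht₀.2.trans ht₁.2⟩, ?_⟩
  linear_combination -hKab - (b - a) ^ 2 / 2 * hψ't₀

section Distribution

variable {Ω : Type*} [MeasurableSpace Ω] {P : Measure Ω} [IsProbabilityMeasure P]
  {X : Ω → ℝ} {f : ℝ → ℝ}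

theorem integrableOn_Iic_of_measure_le_eq
    (hX : ∀ t, P {w | X w ≤ t} = ENNReal.ofReal (∫ u in Iic t, f u)) (t : ℝ) :
    IntegrableOn f (Iic t) := by
  obtain ⟨k, hk⟩ : ∃ k : ℕ, P {w | X w ≤ k} ≠ 0 := by
    by_contra! h
    have hcover : ⋃ k : ℕ, {w | X w ≤ k} = univ :=
      eq_univ_of_forall fun w => mem_iUnion.2 (exists_nat_ge (X w))
    simpa [hcover] using measure_iUnion_null h
  refine IntegrableOn.mono_set ?_ (Iic_subset_Iic.2 (le_max_left t k))
  -- otherwise the Bochner integral is `0`, and so would be `P {X ≤ k}`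
  by_contra hni
  have hnull := hX (max t k)
  rw [integral_undef hni, ENNReal.ofReal_zero] at hnull
  exact hk (measure_mono_null (fun w (hw : X w ≤ k) => hw.trans (le_max_right t k)) hnull)

theorem hasDerivAt_measure_le_toReal_of_density (hf : Continuous f) (hf0 : ∀ u, 0 ≤ f u)
    {c : ℝ} (hXf : ∀ t, P {w | X w - c ≤ t} = ENNReal.ofReal (∫ u in Iic t, f u)) (s : ℝ) :
    HasDerivAt (fun s => (P {w | X w ≤ s}).toReal) (f (s - c)) s := by
  have hcdf : (fun s => (P {w | X w ≤ s}).toReal) = fun s => ∫ u in Iic (s - c), f u := by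
    ext s
    have hset : {w | X w ≤ s} = {w | X w - c ≤ s - c} := by simp_rw [sub_le_sub_iff_right]
    rw [hset, hXf, ENNReal.toReal_ofReal (setIntegral_nonneg measurableSet_Iic fun u _ => hf0 u)]
  rw [hcdf]
  exact (hasDerivAt_integral_Iic hf (integrableOn_Iic_of_measure_le_eq hXf) (s - c)).comp_sub_const
    s c

theorem measure_setOf_eq_eq_zero_of_continuous (hX : Measurable X)
    (hcont : Continuous fun s => (P {w | X w ≤ s}).toReal) (s : ℝ) :
    P {w | X w = s} = 0 := by
  have := Measure.isProbabilityMeasure_map (μ := P) hX.aemeasurable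
  have hcdf : ⇑(cdf (P.map X)) = fun s => (P {w | X w ≤ s}).toReal := by
    ext s
    rw [cdf_eq_real, measureReal_def, Measure.map_apply hX measurableSet_Iic]
    rfl
  have hleft : Function.leftLim (cdf (P.map X)) s = cdf (P.map X) s := by
    rw [hcdf]
    exact hcont.continuousWithinAt.leftLim_eq
  change P (X ⁻¹' {s}) = 0
  rw [← Measure.map_apply hX (measurableSet_singleton s), ← measure_cdf (P.map X),
    StieltjesFunction.measure_singleton, hleft, sub_self, ENNReal.ofReal_zero]

theorem integral_ite_le_one_neg_one (hX : Measurable X) (s : ℝ) :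
    ∫ w, (if X w ≤ s then (1 : ℝ) else -1) ∂P = 2 * (P {w | X w ≤ s}).toReal - 1 := by
  have hset : MeasurableSet {w | X w ≤ s} := hX measurableSet_Iic
  have hind : (fun w => if X w ≤ s then (1 : ℝ) else -1)
      = fun w => {w | X w ≤ s}.indicator (fun _ => (2 : ℝ)) w - 1 := by
    ext w
    by_cases h : X w ≤ s <;> norm_num [h]
  rw [hind, integral_sub ((integrable_const 2).indicator hset) (integrable_const 1),
    integral_indicator_const _ hset]
  simp [measureReal_def, mul_comm]

theorem hasDerivAt_integral_abs_sub (hX : Measurable X) (hXi : Integrable X P) {s : ℝ}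
    (hatom : P {w | X w = s} = 0) :
    HasDerivAt (fun t => ∫ w, |X w - t| ∂P) (2 * (P {w | X w ≤ s}).toReal - 1) s := by
  have hne : ∀ᵐ w ∂P, X w ≠ s := measure_eq_zero_iff_ae_notMem.1 hatom
  rw [← integral_ite_le_one_neg_one hX s]
  exact (hasDerivAt_integral_of_dominated_loc_of_lip (bound := fun _ => 1) univ_mem
    (Eventually.of_forall fun t => (hX.sub_const t).abs.aestronglyMeasurable)
    (hXi.sub (integrable_const s)).abs
    ((Measurable.ite (hX measurableSet_Iic) measurable_const measurable_const).aestronglyMeasurable)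
    (Eventually.of_forall fun w => by simpa using lipschitzWith_abs_sub_left (X w))
    (integrable_const 1) (hne.mono fun w hw => hasDerivAt_abs_sub_left hw)).2

theorem hasDerivAt_integral_abs_sub_of_density (hX : Measurable X) (hXi : Integrable X P)
    (hf : Continuous f) (hf0 : ∀ u, 0 ≤ f u) {c : ℝ}
    (hXf : ∀ t, P {w | X w - c ≤ t} = ENNReal.ofReal (∫ u in Iic t, f u)) (s : ℝ) :
    HasDerivAt (fun t => ∫ w, |X w - t| ∂P) (2 * (P {w | X w ≤ s}).toReal - 1) s :=
  hasDerivAt_integral_abs_sub hX hXi <| measure_setOf_eq_eq_zero_of_continuous hX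
    (continuous_iff_continuousAt.2 fun s =>
      (hasDerivAt_measure_le_toReal_of_density hf hf0 hXf s).continuousAt) s

end Distribution

section InnerProductSpace

variable {E ι : Type*} [NormedAddCommGroup E] [InnerProductSpace ℝ E]

theorem hasGradientAt_sum_comp_inner [CompleteSpace E] (s : Finset ι) {g g' : ι → ℝ → ℝ}
    (v : ι → E) {x : E} (hg : ∀ i ∈ s, HasDerivAt (g i) (g' i ⟪v i, x⟫) ⟪v i, x⟫) :
    HasGradientAt (fun y => ∑ i ∈ s, g i ⟪v i, y⟫) (∑ i ∈ s, g' i ⟪v i, x⟫ • v i) x := by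
  rw [hasGradientAt_iff_hasFDerivAt, map_sum]
  refine HasFDerivAt.fun_sum fun i hi => ?_
  rw [map_smul]
  exact (hg i hi).comp_hasFDerivAt x (innerSL ℝ (v i)).hasFDerivAt

theorem hasFDerivAt_sum_smul_comp_inner {F : Type*} [NormedAddCommGroup F] [NormedSpace ℝ F]
    (s : Finset ι) {h h' : ι → ℝ → ℝ} (v : ι → E) (u : ι → F) {x : E}
    (hh : ∀ i ∈ s, HasDerivAt (h i) (h' i ⟪v i, x⟫) ⟪v i, x⟫) :
    HasFDerivAt (fun y => ∑ i ∈ s, h i ⟪v i, y⟫ • u i)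
      (∑ i ∈ s, (h' i ⟪v i, x⟫ • innerSL ℝ (v i)).smulRight (u i)) x :=
  HasFDerivAt.fun_sum fun i hi =>
    ((hh i hi).comp_hasFDerivAt x (innerSL ℝ (v i)).hasFDerivAt).smul_const (u i)

theorem exists_mem_segment_sub_eq_inner_hessian [CompleteSpace E] {f : E → ℝ} {g : E → E}
    {H : E → E →L[ℝ] E} (hf : ∀ x, HasGradientAt f (g x) x) (hg : ∀ x, HasFDerivAt g (H x) x)
    (x y : E) :
    ∃ z ∈ segment ℝ x y, f y - f x = ⟪g x, y - x⟫ + ⟪H z (y - x), y - x⟫ / 2 := by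
  set ℓ : ℝ → E := fun t => x + t • (y - x)
  have hℓ : ∀ t, HasDerivAt ℓ (y - x) t := fun t =>
    (((hasDerivAt_id t).smul_const (y - x)).const_add x).congr_deriv (one_smul ℝ _)
  have hfℓ : ∀ t, HasDerivAt (f ∘ ℓ) ⟪g (ℓ t), y - x⟫ t := fun t => by
    simpa using (hf (ℓ t)).hasFDerivAt.comp_hasDerivAt t (hℓ t)
  have hgℓ : ∀ t, HasDerivAt (fun t => ⟪g (ℓ t), y - x⟫) ⟪H (ℓ t) (y - x), y - x⟫ t := fun t => by
    simpa using ((hg (ℓ t)).comp_hasDerivAt t (hℓ t)).inner ℝ (hasDerivAt_const t (y - x))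
  obtain ⟨t, ht, hφ⟩ := exists_Ioo_sub_eq_taylor_two zero_lt_one hfℓ hgℓ
  refine ⟨ℓ t, segment_eq_image' ℝ x y ▸ mem_image_of_mem ℓ (Ioo_subset_Icc_self ht), ?_⟩
  simpa [ℓ] using hφ

end InnerProductSpace

section Euclidean

variable {p : ℕ} {ι : Type*}

theorem toEuclideanLin_vecMulVec_apply (a b y : EuclideanSpace ℝ (Fin p)) :
    toEuclideanLin (vecMulVec a b) y = ⟪b, y⟫ • a := by
  ext j
  simp only [toLpLin_apply, mulVec, dotProduct, vecMulVec_apply, PiLp.inner_apply,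
    RCLike.inner_apply, Real.ringHom_apply, PiLp.smul_apply, smul_eq_mul, Finset.sum_mul]
  exact Finset.sum_congr rfl fun i _ => by ring

theorem inner_toEuclideanLin_sum_smul_vecMulVec_self (s : Finset ι) (c : ι → ℝ)
    (v : ι → EuclideanSpace ℝ (Fin p)) (y : EuclideanSpace ℝ (Fin p)) :
    ⟪toEuclideanLin (∑ i ∈ s, c i • vecMulVec (v i) (v i)) y, y⟫ = ∑ i ∈ s, c i * ⟪v i, y⟫ ^ 2 := by
  rw [map_sum, LinearMap.sum_apply, sum_inner]
  refine Finset.sum_congr rfl fun i _ => ?_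
  rw [map_smul, LinearMap.smul_apply, toEuclideanLin_vecMulVec_apply, real_inner_smul_left,
    real_inner_smul_left, real_inner_comm, sq]

theorem hasFDerivAt_sum_smul_comp_inner_self (s : Finset ι) {h h' : ι → ℝ → ℝ}
    (v : ι → EuclideanSpace ℝ (Fin p)) {x : EuclideanSpace ℝ (Fin p)}
    (hh : ∀ i ∈ s, HasDerivAt (h i) (h' i ⟪v i, x⟫) ⟪v i, x⟫) :
    HasFDerivAt (fun y => ∑ i ∈ s, h i ⟪v i, y⟫ • v i)
      (LinearMap.toContinuousLinearMap
        (toEuclideanLin (∑ i ∈ s, h' i ⟪v i, x⟫ • vecMulVec (v i) (v i)))) x := by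
  refine (hasFDerivAt_sum_smul_comp_inner s v v hh).congr_fderiv
    (ContinuousLinearMap.ext fun y => ?_)
  simp [map_sum, toEuclideanLin_vecMulVec_apply, smul_smul]

end Euclidean

theorem lad_expected_contrast_hessian_general
    {p n : ℕ}
    {Ω : Type*} [MeasurableSpace Ω] (P : Measure Ω) [IsProbabilityMeasure P]
    (Y : Fin n → Ω → ℝ)
    (hmeas : ∀ i, Measurable (Y i))
    (hint : ∀ i, Integrable (Y i) P)
    (Ψ : Fin n → EuclideanSpace ℝ (Fin p))
    (θstar : EuclideanSpace ℝ (Fin p))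
    -- each residual Yᵢ - Ψᵢᵀθ* has a bounded continuous density pᵢ
    (pdf : Fin n → ℝ → ℝ)
    (hpdfcont : ∀ i, Continuous (pdf i))
    (hpdfnonneg : ∀ i u, 0 ≤ pdf i u)
    (hpdf : ∀ i, ∀ t : ℝ,
      P {w | Y i w - ⟪Ψ i, θstar⟫ ≤ t} = ENNReal.ofReal (∫ u in Set.Iic t, pdf i u))
    -- θ* is a stationary point of M(θ) := -(1/2)Σᵢ E|Yᵢ - Ψᵢᵀθ|
    (hstat : ∑ i, ((P {w | Y i w ≤ ⟪Ψ i, θstar⟫}).toReal - 1 / 2) • Ψ i = 0) :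
    -- (i) M is twice differentiable with -∇²M(θ) = Σᵢ pᵢ(Ψᵢᵀ(θ-θ*))ΨᵢΨᵢᵀ
    (∃ G : EuclideanSpace ℝ (Fin p) → EuclideanSpace ℝ (Fin p),
      (∀ θ, HasGradientAt (fun t : EuclideanSpace ℝ (Fin p) =>
          -(1 / 2) * ∑ i, ∫ w, |Y i w - ⟪Ψ i, t⟫| ∂P) (G θ) θ)
      ∧ ∀ θ, HasFDerivAt G
          (LinearMap.toContinuousLinearMap (Matrix.toEuclideanLin
            (-(∑ i, pdf i ⟪Ψ i, θ - θstar⟫ • Matrix.vecMulVec (Ψ i) (Ψ i))))) θ)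
    -- (ii) second-order representation of M(θ*) - M(θ)
    ∧ ∀ θ : EuclideanSpace ℝ (Fin p), ∃ θc ∈ segment ℝ θstar θ,
        (-(1 / 2) * ∑ i, ∫ w, |Y i w - ⟪Ψ i, θstar⟫| ∂P)
            - (-(1 / 2) * ∑ i, ∫ w, |Y i w - ⟪Ψ i, θ⟫| ∂P)
          = 1 / 2 * ∑ i, ⟪Ψ i, θ - θstar⟫ ^ 2 * pdf i ⟪Ψ i, θc - θstar⟫ := by
  set F : Fin n → ℝ → ℝ := fun i s => (P {w | Y i w ≤ s}).toReal
  set G := fun θ : EuclideanSpace ℝ (Fin p) => ∑ i, (1 / 2 - F i ⟪Ψ i, θ⟫) • Ψ i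
  have hgrad (θ : EuclideanSpace ℝ (Fin p)) : HasGradientAt (fun t : EuclideanSpace ℝ (Fin p) =>
      -(1 / 2) * ∑ i, ∫ w, |Y i w - ⟪Ψ i, t⟫| ∂P) (G θ) θ := by
    simpa only [Finset.mul_sum] using hasGradientAt_sum_comp_inner Finset.univ Ψ
      (g := fun i s => -(1 / 2) * ∫ w, |Y i w - s| ∂P) (g' := fun i s => 1 / 2 - F i s)
      fun i _ => ((hasDerivAt_integral_abs_sub_of_density (hmeas i) (hint i) (hpdfcont i)
        (hpdfnonneg i) (hpdf i) _).const_mul _).congr_deriv (by ring)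
  have hhess (θ : EuclideanSpace ℝ (Fin p)) : HasFDerivAt G
      (LinearMap.toContinuousLinearMap (Matrix.toEuclideanLin
        (-(∑ i, pdf i ⟪Ψ i, θ - θstar⟫ • Matrix.vecMulVec (Ψ i) (Ψ i))))) θ := by
    simpa [inner_sub_right, Finset.sum_neg_distrib] using
      hasFDerivAt_sum_smul_comp_inner_self Finset.univ Ψ
        (h' := fun i s => -pdf i (s - ⟪Ψ i, θstar⟫)) fun i _ =>
          (hasDerivAt_measure_le_toReal_of_density (hpdfcont i) (hpdfnonneg i) (hpdf i)
            _).const_sub (1 / 2)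
  refine ⟨⟨G, hgrad, hhess⟩, fun θ => ?_⟩
  obtain ⟨θc, hθc, htaylor⟩ := exists_mem_segment_sub_eq_inner_hessian hgrad hhess θstar θ
  have hG : G θstar = 0 := by
    calc G θstar = -∑ i, (F i ⟪Ψ i, θstar⟫ - 1 / 2) • Ψ i := by
          simp [G, ← Finset.sum_neg_distrib, ← neg_smul]
      _ = 0 := by rw [hstat, neg_zero]
  refine ⟨θc, hθc, ?_⟩
  rw [hG, inner_zero_left, zero_add, LinearMap.coe_toContinuousLinearMap', map_neg,
    LinearMap.neg_apply, inner_neg_left, inner_toEuclideanLin_sum_smul_vecMulVec_self] at htaylor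
  simp_rw [mul_comm (⟪_, θ - θstar⟫ ^ 2)]
  linear_combination -htaylor

/-- **Hessian of the expected least-absolute-deviation contrast** (Lemma `Lidentmed`):
`M(θ) = -(1/2)Σᵢ E|Yᵢ - Ψᵢᵀθ|` is twice differentiable with
`-∇²M(θ) = Σᵢ pᵢ(Ψᵢᵀ(θ-θ*))ΨᵢΨᵢᵀ`, and `M(θ*) - M(θ)` has a second-order
representation at an intermediate point of the segment `[θ*, θ]`. -/
theorem lad_expected_contrast_hessian
    {p n : ℕ}
    {Ω : Type*} [MeasurableSpace Ω] (P : Measure Ω) [IsProbabilityMeasure P]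
    (Y : Fin n → Ω → ℝ)
    (hmeas : ∀ i, Measurable (Y i))
    (hint : ∀ i, Integrable (Y i) P)
    (hindep : iIndepFun Y P)
    (Ψ : Fin n → EuclideanSpace ℝ (Fin p))
    (θstar : EuclideanSpace ℝ (Fin p))
    -- each residual Yᵢ - Ψᵢᵀθ* has a bounded continuous density pᵢ
    (pdf : Fin n → ℝ → ℝ)
    (hpdfcont : ∀ i, Continuous (pdf i))
    (hpdfbdd : ∀ i, ∃ C : ℝ, ∀ u : ℝ, pdf i u ≤ C)
    (hpdfnonneg : ∀ i u, 0 ≤ pdf i u)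
    (hpdf : ∀ i, ∀ t : ℝ,
      P {w | Y i w - ⟪Ψ i, θstar⟫ ≤ t} = ENNReal.ofReal (∫ u in Set.Iic t, pdf i u))
    -- θ* is a stationary point of M(θ) := -(1/2)Σᵢ E|Yᵢ - Ψᵢᵀθ|
    (hstat : ∑ i, ((P {w | Y i w ≤ ⟪Ψ i, θstar⟫}).toReal - 1 / 2) • Ψ i = 0) :
    -- (i) M is twice differentiable with -∇²M(θ) = Σᵢ pᵢ(Ψᵢᵀ(θ-θ*))ΨᵢΨᵢᵀ
    (∃ G : EuclideanSpace ℝ (Fin p) → EuclideanSpace ℝ (Fin p),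
      (∀ θ, HasGradientAt (fun t : EuclideanSpace ℝ (Fin p) =>
          -(1 / 2) * ∑ i, ∫ w, |Y i w - ⟪Ψ i, t⟫| ∂P) (G θ) θ)
      ∧ ∀ θ, HasFDerivAt G
          (LinearMap.toContinuousLinearMap (Matrix.toEuclideanLin
            (-(∑ i, pdf i ⟪Ψ i, θ - θstar⟫ • Matrix.vecMulVec (Ψ i) (Ψ i))))) θ)
    -- (ii) second-order representation of M(θ*) - M(θ)
    ∧ ∀ θ : EuclideanSpace ℝ (Fin p), ∃ θc ∈ segment ℝ θstar θ,
        (-(1 / 2) * ∑ i, ∫ w, |Y i w - ⟪Ψ i, θstar⟫| ∂P)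
            - (-(1 / 2) * ∑ i, ∫ w, |Y i w - ⟪Ψ i, θ⟫| ∂P)
          = 1 / 2 * ∑ i, ⟪Ψ i, θ - θstar⟫ ^ 2 * pdf i ⟪Ψ i, θc - θstar⟫ :=
  lad_expected_contrast_hessian_general P Y hmeas hint Ψ θstar pdf hpdfcont hpdfnonneg hpdf hstat
end
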